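/- arXiv:0901.4591 — 6 statements merged into one kernel-verified Lean document; each statement's English description precedes it below -/
import Mathlib

section
/- Let F be a field, let α be an element of F of multiplicative order at least n, let t ≤ n, and let H be the t × n matrix over F whose entry in row i (0 ≤ i < t) and column j (0 ≤ j < n) is α^(i·j). Then for every injective map σ from {0,…,t−1} into {0,…,n−1}, the t × t matrix whose (i,k) entry is α^(i·σ(k)) is invertible. -/
/-- If `α` has multiplicative order at least `n` (its first `n` powers are
pairwise distinct) and `t ≤ n`, then every `t × t` submatrix of the protection
matrix `H i j = α ^ (i * j)` obtained by selecting `t` distinct columns is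
invertible. -/
theorem protection_submatrix_isUnit {F : Type*} [Field F] (n t : ℕ) (α : F)
    (hα : ∀ i j : ℕ, i < n → j < n → α ^ i = α ^ j → i = j) (htn : t ≤ n)
    (σ : Fin t → Fin n) (hσ : Function.Injective σ) :
    IsUnit ((Matrix.of fun i k : Fin t => α ^ (i.1 * (σ k).1)) :
      Matrix (Fin t) (Fin t) F) := by
  rw [Matrix.isUnit_iff_isUnit_det]
  have hM : (Matrix.of fun i k : Fin t => α ^ (i.1 * (σ k).1)) =
      Matrix.transpose (Matrix.vandermonde fun k : Fin t => α ^ (σ k).1) := by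
    ext i k
    simp [Matrix.vandermonde, ← pow_mul, Nat.mul_comm]
  rw [hM, Matrix.det_transpose, Matrix.det_vandermonde]
  rw [isUnit_iff_ne_zero, Finset.prod_ne_zero_iff]
  intro i _
  rw [Finset.prod_ne_zero_iff]
  intro j hj
  rw [sub_ne_zero]
  intro h
  have := hα _ _ (σ j).2 (σ i).2 h
  exact absurd (hσ (Fin.ext this)) (Finset.mem_Ioi.mp hj).ne'
end

section
/- Let F be a field, let α ∈ F have multiplicative order at least n, and let t ≤ n. Let S be a subset of {0,…,n−1} with at most t elements, and let x, x′ : {0,…,n−1} → F be two data vectors that agree at every index outside S. If for every i with 0 ≤ i < t the encoded values agree, i.e. Σ_{j=0}^{n−1} α^(i·j)·x_j = Σ_{j=0}^{n−1} α^(i·j)·x′_j, then x = x′. (Hence the t lost data units on the failed paths are uniquely recoverable from the t encoded combinations together with the surviving plain data.) -/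
/-!
The differences `d = x - x'` vanish outside `S`, so the equal encodings say that the first
`t ≥ #S` power sums `∑_{j ∈ S} d_j (α^j)^i` vanish. The nodes `α^j` are distinct, so the
square Vandermonde system on `S` is invertible and `d = 0`.
-/

open Finset

theorem Finset.eq_zero_of_forall_sum_mul_pow_eq_zero {R ι : Type*} [CommRing R] [IsDomain R]
    {s : Finset ι} {f c : ι → R} (hf : Set.InjOn f s)
    (h : ∀ k < #s, ∑ j ∈ s, c j * f j ^ k = 0) : ∀ j ∈ s, c j = 0 := by
  let e := s.equivFin.symm
  have hfe : Function.Injective (fun k => f (e k)) := fun k l hkl =>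
    e.injective (Subtype.ext (hf (e k).2 (e l).2 hkl))
  have hce : (fun k => c (e k)) = 0 := by
    refine Matrix.eq_zero_of_forall_pow_sum_mul_pow_eq_zero hfe fun k => ?_
    rw [← h k k.2, ← s.sum_coe_sort]
    exact e.sum_comp fun j => c j * f j ^ (k : ℕ)
  intro j hj
  simpa [e] using congrFun hce (s.equivFin ⟨j, hj⟩)

theorem nps_t_unique_recovery_general {F : Type*} [Field F] (n t : ℕ) (α : F)
    (hα : ∀ i j : ℕ, i < n → j < n → α ^ i = α ^ j → i = j)
    (S : Finset (Fin n)) (hS : S.card ≤ t) (x x' : Fin n → F)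
    (hagree : ∀ j : Fin n, j ∉ S → x j = x' j)
    (henc : ∀ i : ℕ, i < t →
      ∑ j : Fin n, α ^ (i * j.1) * x j = ∑ j : Fin n, α ^ (i * j.1) * x' j) :
    x = x' := by
  have hout : ∀ j ∉ S, x j - x' j = 0 := fun j hj => sub_eq_zero.mpr (hagree j hj)
  have hinj : Set.InjOn (fun j : Fin n => α ^ (j : ℕ)) S := fun j _ k _ hjk =>
    Fin.ext (hα _ _ j.2 k.2 hjk)
  have hpow : ∀ i < #S, ∑ j ∈ S, (x j - x' j) * (α ^ (j : ℕ)) ^ i = 0 := by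
    intro i hi
    rw [sum_subset (subset_univ S) fun j _ hj => by rw [hout j hj, zero_mul]]
    simp only [← pow_mul, mul_comm _ i, mul_comm _ (α ^ _), mul_sub, sum_sub_distrib,
      henc i (hi.trans_le hS), sub_self]
  funext j
  by_cases hj : j ∈ S
  · exact sub_eq_zero.mp (eq_zero_of_forall_sum_mul_pow_eq_zero hinj hpow j hj)
  · exact hagree j hj

/-- If two data vectors agree outside a set `S` of at most `t` indices and
have the same `t` encoded combinations `∑ j, α ^ (i * j) * x j` for `i < t`,
then they are equal: the lost data units are uniquely recoverable. -/
theorem nps_t_unique_recovery {F : Type*} [Field F] (n t : ℕ) (α : F)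
    (hα : ∀ i j : ℕ, i < n → j < n → α ^ i = α ^ j → i = j) (htn : t ≤ n)
    (S : Finset (Fin n)) (hS : S.card ≤ t) (x x' : Fin n → F)
    (hagree : ∀ j : Fin n, j ∉ S → x j = x' j)
    (henc : ∀ i : ℕ, i < t →
      ∑ j : Fin n, α ^ (i * j.1) * x j = ∑ j : Fin n, α ^ (i * j.1) * x' j) :
    x = x' :=
  nps_t_unique_recovery_general n t α hα S hS x x' hagree henc
end

section
/- Let F be a field, let α ∈ F have multiplicative order at least n, and let t ≤ n. If a nonzero vector x : {0,…,n−1} → F satisfies Σ_{j=0}^{n−1} α^(i·j)·x_j = 0 for every i with 0 ≤ i < t, then x has more than t nonzero coordinates. -/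
open scoped Classical
open Matrix

/-- A nonzero vector in the kernel of the protection code
`H i j = α ^ (i * j)` (with `t` rows) has more than `t` nonzero coordinates. -/
theorem nps_t_kernel_weight {F : Type*} [Field F] (n t : ℕ) (α : F)
    (hα : ∀ i j : ℕ, i < n → j < n → α ^ i = α ^ j → i = j) (htn : t ≤ n)
    (x : Fin n → F) (hx : x ≠ 0)
    (hker : ∀ i : ℕ, i < t → ∑ j : Fin n, α ^ (i * j.1) * x j = 0) :
    t < (Finset.univ.filter fun j : Fin n => x j ≠ 0).card := by
  by_contra hcon
  push_neg at hcon
  set S : Finset (Fin n) := Finset.univ.filter (fun j : Fin n => x j ≠ 0) with hS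
  set s : ℕ := S.card with hs
  have hst : s ≤ t := hcon
  let e := S.orderIsoOfFin rfl
  let v : Fin s → F := fun k => α ^ ((e k : Fin n) : ℕ)
  have hvinj : Function.Injective v := by
    intro a b hab
    have := hα _ _ (e a).1.isLt (e b).1.isLt hab
    have : (e a : Fin n) = (e b : Fin n) := Fin.ext this
    exact e.injective (Subtype.ext this)
  let y : Fin s → F := fun k => x (e k)
  have hMy : (Matrix.vandermonde v)ᵀ.mulVec y = 0 := by
    funext i
    have hit : (i : ℕ) < t := lt_of_lt_of_le i.isLt hst
    have h0 := hker i hit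
    have hsum : ∑ j : Fin n, α ^ ((i : ℕ) * j.1) * x j
        = ∑ j ∈ S, α ^ ((i : ℕ) * j.1) * x j := by
      rw [← Finset.sum_filter_add_sum_filter_not Finset.univ (fun j => x j ≠ 0)]
      have : ∑ j ∈ Finset.univ.filter (fun j : Fin n => ¬ x j ≠ 0),
          α ^ ((i : ℕ) * j.1) * x j = 0 := by
        apply Finset.sum_eq_zero
        intro j hj
        simp only [Finset.mem_filter, not_not] at hj
        rw [hj.2, mul_zero]
      rw [this, add_zero]
    have hsum2 : ∑ j ∈ S, α ^ ((i : ℕ) * j.1) * x j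
        = ∑ k : Fin s, v k ^ (i : ℕ) * y k := by
      rw [← Finset.sum_attach S (fun j => α ^ ((i : ℕ) * j.1) * x j)]
      rw [← Finset.univ_eq_attach,
        ← e.toEquiv.sum_comp (fun j => α ^ ((i : ℕ) * ((j : Fin n) : ℕ)) * x (j : Fin n))]
      apply Finset.sum_congr rfl
      intro k _
      show α ^ ((i : ℕ) * ((e k : Fin n) : ℕ)) * x (e k) = v k ^ (i : ℕ) * y k
      simp only [v, y, ← pow_mul, Nat.mul_comm]
    simp only [Matrix.mulVec, Matrix.transpose_apply, Matrix.vandermonde, Pi.zero_apply,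
      Matrix.of_apply, dotProduct]
    rw [← hsum2, ← hsum]
    exact h0
  have hdet : (Matrix.vandermonde v)ᵀ.det ≠ 0 := by
    rw [Matrix.det_transpose, Matrix.det_vandermonde_ne_zero_iff]
    exact hvinj
  have hy0 : y = 0 := Matrix.eq_zero_of_mulVec_eq_zero hdet hMy
  obtain ⟨j0, hj0⟩ : ∃ j, x j ≠ 0 := by
    by_contra h
    push_neg at h
    exact hx (funext h)
  have hj0S : j0 ∈ S := by simp [hS, hj0]
  obtain ⟨k, hk⟩ := e.surjective ⟨j0, hj0S⟩
  have : y k = x j0 := by simp [y, hk]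
  rw [hy0] at this
  exact hj0 this.symm
end

section
/- Let F be a field, let α ∈ F have multiplicative order at least n, and let t ≤ n. Then every family of at most t distinct columns of H is linearly independent over F; that is, for every injective map σ : {0,…,s−1} → {0,…,n−1} with s ≤ t, the vectors c_k : {0,…,t−1} → F given by c_k(i) = α^(i·σ(k)) for k = 0,…,s−1 are linearly independent. -/
/-- Any family of at most `t` distinct columns of the protection matrix
`H i j = α ^ (i * j)` is linearly independent over `F`. -/
theorem nps_t_columns_linearIndependent {F : Type*} [Field F] (n t s : ℕ) (α : F)
    (hα : ∀ i j : ℕ, i < n → j < n → α ^ i = α ^ j → i = j) (htn : t ≤ n)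
    (hst : s ≤ t) (σ : Fin s → Fin n) (hσ : Function.Injective σ) :
    LinearIndependent F
      (fun k : Fin s => (fun i : Fin t => α ^ (i.1 * (σ k).1))) := by
  rw [Fintype.linearIndependent_iff]
  intro g hg
  have hx : Function.Injective (fun k : Fin s => α ^ (σ k).1) := by
    intro a b hab
    exact hσ (Fin.ext (hα _ _ (σ a).2 (σ b).2 hab))
  have key : (fun k : Fin s => g k) = 0 := by
    apply Matrix.eq_zero_of_forall_pow_sum_mul_pow_eq_zero hx
    intro i
    have := congrFun hg (Fin.castLE hst i)
    simp only [Finset.sum_apply, Pi.smul_apply, smul_eq_mul, Pi.zero_apply] at this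
    simpa [mul_comm (i : ℕ), pow_mul] using this
  exact fun i => congrFun key i
end

section
/- Let F be a finite field with q elements, let 2 ≤ t ≤ n, and suppose H is a t × n matrix over F with the property that for every injective map σ from {0,…,t−1} into {0,…,n−1}, the t × t submatrix of H formed by the columns σ(0),…,σ(t−1) is invertible. Then q ≥ n − t + 1. -/
/-!
Fix `t - 2` of the columns and pass to the quotient of `F^t` by their span, which is a plane.
Since any `t` columns are independent, the other `n - t + 2` columns become pairwise independent
in that plane, i.e. they are distinct points of the projective line over `F`, which has only
`q + 1` points.
-/

open Module Submodule Set

section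

variable {R M : Type*} [Ring R] [AddCommGroup M] [Module R M]
variable {F V : Type*} [Field F] [AddCommGroup V] [Module F V]

theorem LinearIndependent.mkQ_comp_of_sumElim {ι κ : Type*} {u : ι → M} {w : κ → M}
    (h : LinearIndependent R (Sum.elim u w)) :
    LinearIndependent R ((span R (range u)).mkQ ∘ w) := by
  obtain ⟨-, hw, hdisj⟩ := linearIndependent_sum.1 h
  exact hw.map (by simpa [ker_mkQ] using hdisj.symm)

theorem linearIndependent_mkQ_pair {ι : Type*} {m : ℕ} {c : ι → M}
    (hc : ∀ σ : Fin (m + 2) → ι, Function.Injective σ → LinearIndependent R (c ∘ σ))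
    {b : Fin m → ι} (hb : Function.Injective b) {i j : ι} (hi : i ∉ range b) (hj : j ∉ range b)
    (hij : i ≠ j) :
    LinearIndependent R
      ![(span R (range (c ∘ b))).mkQ (c i), (span R (range (c ∘ b))).mkQ (c j)] := by
  have hσ : Function.Injective (Fin.append b ![i, j]) := by
    refine Fin.append_injective_iff.2 ⟨hb, injective_pair_iff_ne.2 hij, fun k l hkl => ?_⟩
    fin_cases l
    exacts [hi ⟨k, hkl⟩, hj ⟨k, hkl⟩]
  have hsplit : (c ∘ Fin.append b ![i, j]) ∘ finSumFinEquiv = Sum.elim (c ∘ b) ![c i, c j] := by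
    ext (k | k)
    · simp
    · fin_cases k <;> simp
  have h := ((linearIndependent_equiv' finSumFinEquiv hsplit).2 (hc _ hσ)).mkQ_comp_of_sumElim
  have hq : (span R (range (c ∘ b))).mkQ ∘ ![c i, c j] =
      ![(span R (range (c ∘ b))).mkQ (c i), (span R (range (c ∘ b))).mkQ (c j)] := by
    ext k; fin_cases k <;> rfl
  rwa [hq] at h

theorem card_le_card_add_one_of_pairwise_linearIndependent [Finite F] (hV : finrank F V = 2)
    {κ : Type*} (v : κ → V) (hv : ∀ i j, i ≠ j → LinearIndependent F ![v i, v j]) :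
    Nat.card κ ≤ Nat.card F + 1 := by
  rcases subsingleton_or_nontrivial κ with hκ | hκ
  · have := Finite.card_le_one_iff_subsingleton.2 hκ
    omega
  have hv0 (k : κ) : v k ≠ 0 := by
    obtain ⟨k', hk'⟩ := exists_ne k
    exact (hv k k' hk'.symm).ne_zero 0
  have : FiniteDimensional F V := finite_of_finrank_eq_succ hV
  have : Finite V := Module.finite_of_finite F
  rw [← Projectivization.card_of_finrank_two F V hV]
  refine Nat.card_le_card_of_injective (fun k => Projectivization.mk F (v k) (hv0 k)) ?_
  intro i j hij
  by_contra hne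
  obtain ⟨a, ha⟩ := (Projectivization.mk_eq_mk_iff' F _ _ (hv0 i) (hv0 j)).1 hij
  exact (LinearIndependent.pair_iff' (hv0 j)).1 (hv j i (Ne.symm hne)) a ha

theorem card_le_card_add_of_forall_linearIndependent [Fintype F] {ι : Type*} [Fintype ι]
    {m : ℕ} (hV : finrank F V = m + 2) (c : ι → V)
    (hc : ∀ σ : Fin (m + 2) → ι, Function.Injective σ → LinearIndependent F (c ∘ σ)) :
    Fintype.card ι ≤ Fintype.card F + m + 1 := by
  classical
  by_cases hι : Fintype.card ι < m + 2
  · omega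
  obtain ⟨e⟩ : Nonempty (Fin (m + 2) ↪ ι) :=
    Function.Embedding.nonempty_of_card_le (by simpa using not_lt.1 hι)
  set b : Fin m → ι := e ∘ Fin.castAdd 2
  have hb : Function.Injective b := e.injective.comp (Fin.castAdd_injective m 2)
  have hu : LinearIndependent F (c ∘ b) := (hc e e.injective).comp _ (Fin.castAdd_injective m 2)
  have : FiniteDimensional F V := finite_of_finrank_eq_succ hV
  have hplane : finrank F (V ⧸ span F (range (c ∘ b))) = 2 := by
    have := (span F (range (c ∘ b))).finrank_quotient_add_finrank
    rw [finrank_span_eq_card hu, Fintype.card_fin] at this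
    omega
  have hrest : Fintype.card {i // i ∉ range b} = Fintype.card ι - m := by
    rw [Fintype.card_subtype_compl, Set.card_range_of_injective hb, Fintype.card_fin]
  have hline := card_le_card_add_one_of_pairwise_linearIndependent hplane
    (fun k : {i // i ∉ range b} => (span F (range (c ∘ b))).mkQ (c k))
    fun i j hij => linearIndependent_mkQ_pair hc hb i.2 j.2 (Subtype.coe_injective.ne hij)
  rw [Nat.card_eq_fintype_card, Nat.card_eq_fintype_card, hrest] at hline
  omega

end

theorem field_size_lower_bound_general {F : Type*} [Field F] [Fintype F]
    (n t : ℕ) (ht : 2 ≤ t) (H : Matrix (Fin t) (Fin n) F)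
    (hH : ∀ σ : Fin t → Fin n, Function.Injective σ →
      IsUnit ((Matrix.of fun i k : Fin t => H i (σ k)) :
        Matrix (Fin t) (Fin t) F)) :
    n - t + 1 ≤ Fintype.card F := by
  obtain ⟨m, rfl⟩ : ∃ m, t = m + 2 := ⟨t - 2, by omega⟩
  have hcols := card_le_card_add_of_forall_linearIndependent (finrank_fin_fun F) H.col
    fun σ hσ => Matrix.linearIndependent_cols_iff_isUnit.2 (hH σ hσ)
  rw [Fintype.card_fin] at hcols
  have : 0 < Fintype.card F := Fintype.card_pos
  omega

/-- If a `t × n` matrix over a finite field with `q` elements (with `2 ≤ t ≤ n`)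
has every `t × t` submatrix formed by distinct columns invertible, then
`q ≥ n - t + 1`. -/
theorem field_size_lower_bound {F : Type*} [Field F] [Fintype F]
    (n t : ℕ) (ht : 2 ≤ t) (htn : t ≤ n) (H : Matrix (Fin t) (Fin n) F)
    (hH : ∀ σ : Fin t → Fin n, Function.Injective σ →
      IsUnit ((Matrix.of fun i k : Fin t => H i (σ k)) :
        Matrix (Fin t) (Fin t) F)) :
    n - t + 1 ≤ Fintype.card F :=
  field_size_lower_bound_general n t ht H hH
end

section
/- Let F be a field, let α ∈ F have multiplicative order at least n, and let t ≤ n. Consider the linear map from F^n to F^t sending x to H·x, where H is the t × n matrix with entry α^(i·j) in row i, column j. Then the kernel of this map is a subspace of F^n of dimension exactly n − t. -/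
/-!
The `t × n` matrix `H` has entries `(α ^ j) ^ i`: it is a rectangular Vandermonde matrix on the
`n` distinct nodes `α ^ j`. Its first `t` columns form the transpose of a square Vandermonde
matrix on distinct nodes, which is invertible, so `H` has full row rank `t`; rank–nullity then
gives a kernel of dimension `n - t`.
-/

open Module

namespace Matrix

variable {K : Type*} [Field K]

theorem rank_add_finrank_ker_mulVecLin {m n : Type*} [Fintype n] (A : Matrix m n K) :
    A.rank + finrank K (LinearMap.ker A.mulVecLin) = Fintype.card n := by
  rw [rank, LinearMap.finrank_range_add_finrank_ker, finrank_fintype_fun_eq_card]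

theorem rank_of_pow_of_injective {t n : ℕ} {v : Fin n → K} (hv : Function.Injective v)
    (htn : t ≤ n) : (of fun (i : Fin t) (j : Fin n) => v j ^ (i : ℕ)).rank = t := by
  refine le_antisymm (rank_le_height _) ?_
  have hsquare : (of fun (i : Fin t) (j : Fin n) => v j ^ (i : ℕ)).submatrix id (Fin.castLE htn)
      = (vandermonde (v ∘ Fin.castLE htn))ᵀ := rfl
  have hdet : (vandermonde (v ∘ Fin.castLE htn)).det ≠ 0 :=
    det_vandermonde_ne_zero_iff.mpr (hv.comp (Fin.castLE_injective htn))
  calc t = (vandermonde (v ∘ Fin.castLE htn))ᵀ.rank := by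
        rw [rank_transpose, rank_of_det_ne_zero hdet, Fintype.card_fin]
    _ ≤ _ := hsquare ▸ rank_submatrix_le _ _ _

end Matrix

/-- The kernel of the linear map `x ↦ H.mulVec x`, where `H` is the `t × n`
protection matrix with entry `α ^ (i * j)`, has dimension exactly `n - t`. -/
theorem nps_t_kernel_dim {F : Type*} [Field F] (n t : ℕ) (α : F)
    (hα : ∀ i j : ℕ, i < n → j < n → α ^ i = α ^ j → i = j) (htn : t ≤ n) :
    Module.finrank F
      (LinearMap.ker (Matrix.mulVecLin
        ((Matrix.of fun (i : Fin t) (j : Fin n) => α ^ (i.1 * j.1)) :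
          Matrix (Fin t) (Fin n) F))) = n - t := by
  have hnodes : Function.Injective fun j : Fin n => α ^ (j : ℕ) :=
    fun i j hij => Fin.ext (hα i j i.2 j.2 hij)
  have hH : (Matrix.of fun (i : Fin t) (j : Fin n) => α ^ (i.1 * j.1)) =
      Matrix.of fun (i : Fin t) (j : Fin n) => (α ^ (j : ℕ)) ^ (i : ℕ) := by
    ext i j
    simp only [Matrix.of_apply, ← pow_mul, mul_comm]
  rw [hH]
  have hrank := Matrix.rank_add_finrank_ker_mulVecLin
    (Matrix.of fun (i : Fin t) (j : Fin n) => (α ^ (j : ℕ)) ^ (i : ℕ))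
  rw [Matrix.rank_of_pow_of_injective hnodes htn, Fintype.card_fin] at hrank
  omega
end
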